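/- arXiv:2501.11941 — 5 statements merged into one kernel-verified Lean document; each statement's English description precedes it below -/
import Mathlib

section
/- Let A_0 = u v' be a rank-one matrix with v'u ≠ 0, and let w_0, w_1, …, w_r be nonempty words over an alphabet indexing matrices A_1,…,A_{m-1}, with t_0,…,t_r positive integers. Then the Frobenius norm of the product A_{w_0} A_0^{t_0} A_{w_1} A_0^{t_1} ⋯ A_{w_r} A_0^{t_r} equals |v'u|^{(∑_{j=0}^r t_j) - (r+1)} · (∏_{j=1}^r |v' A_{w_j} u|) · ‖A_{w_0} u‖₂ · ‖v‖₂, where A_w denotes the product of matrices A_{w_1}⋯A_{w_ℓ} for a word w = w_1⋯w_ℓ. -/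
/-!
Every factor `A_{w_j} (u vᵀ)^{t_j} = (vᵀu)^{t_j - 1} (A_{w_j} u) vᵀ` is rank one with the same row
vector `vᵀ`, and a product of rank-one matrices `x_j vᵀ` collapses to `(∏_{j ≥ 1} vᵀ x_j) x_0 vᵀ`.
The Frobenius norm of `x vᵀ` is `‖x‖₂ ‖v‖₂`.
-/

open Matrix

/-- Frobenius norm of a complex matrix. -/
noncomputable def frobNorm {d : ℕ} (A : Matrix (Fin d) (Fin d) ℂ) : ℝ :=
  Real.sqrt (Matrix.trace (Aᴴ * A)).re

/-- Euclidean norm of a complex vector. -/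
noncomputable def eucNorm {d : ℕ} (x : Fin d → ℂ) : ℝ :=
  Real.sqrt (∑ i, ‖x i‖ ^ 2)

section RankOne

variable {R ι : Type*} [CommSemiring R] [Fintype ι] [DecidableEq ι]

theorem vecMulVec_pow_succ (x y : ι → R) (k : ℕ) :
    vecMulVec x y ^ (k + 1) = (y ⬝ᵥ x) ^ k • vecMulVec x y := by
  induction k with
  | zero => simp
  | succ k ih =>
    rw [pow_succ, ih, smul_mul_assoc, vecMulVec_mul_vecMulVec, vecMulVec_smul, smul_smul,
      ← pow_succ]

theorem mul_vecMulVec_pow (B : Matrix ι ι R) (x y : ι → R) {k : ℕ} (hk : 1 ≤ k) :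
    B * vecMulVec x y ^ k = (y ⬝ᵥ x) ^ (k - 1) • vecMulVec (B *ᵥ x) y := by
  obtain ⟨k, rfl⟩ := Nat.exists_eq_add_of_le' hk
  rw [vecMulVec_pow_succ, mul_smul_comm, mul_vecMulVec, Nat.add_sub_cancel]

theorem prod_ofFn_smul_vecMulVec {n : ℕ} (c : Fin (n + 1) → R) (x : Fin (n + 1) → ι → R)
    (y : ι → R) :
    (List.ofFn fun j => c j • vecMulVec (x j) y).prod =
      ((∏ j, c j) * ∏ j : Fin n, y ⬝ᵥ x j.succ) • vecMulVec (x 0) y := by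
  induction n with
  | zero => simp
  | succ n ih =>
    rw [List.ofFn_succ, List.prod_cons, ih (fun j => c j.succ) (fun j => x j.succ),
      smul_mul_smul_comm, vecMulVec_mul_vecMulVec, vecMulVec_smul, smul_smul,
      Fin.prod_univ_succ c, Fin.prod_univ_succ fun j : Fin (n + 1) => y ⬝ᵥ x j.succ]
    congr 1
    ring

end RankOne

theorem frobNorm_eq_sqrt_sum {d : ℕ} (A : Matrix (Fin d) (Fin d) ℂ) :
    frobNorm A = √(∑ i, ∑ j, ‖A i j‖ ^ 2) := by
  rw [frobNorm, trace, Finset.sum_comm, Complex.re_sum]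
  congr 1
  refine Finset.sum_congr rfl fun j _ => ?_
  simp only [diag_apply, mul_apply, conjTranspose_apply, Complex.star_def, Complex.conj_mul',
    Complex.re_sum]
  norm_cast

theorem eucNorm_smul {d : ℕ} (z : ℂ) (x : Fin d → ℂ) : eucNorm (z • x) = ‖z‖ * eucNorm x := by
  simp only [eucNorm, Pi.smul_apply, smul_eq_mul, norm_mul, mul_pow, ← Finset.mul_sum]
  rw [Real.sqrt_mul (by positivity), Real.sqrt_sq (norm_nonneg z)]

theorem frobNorm_vecMulVec {d : ℕ} (x y : Fin d → ℂ) :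
    frobNorm (vecMulVec x y) = eucNorm x * eucNorm y := by
  simp only [frobNorm_eq_sqrt_sum, vecMulVec_apply, norm_mul, mul_pow, ← Finset.mul_sum,
    ← Finset.sum_mul]
  rw [Real.sqrt_mul (by positivity), eucNorm, eucNorm]

theorem frobNorm_word_product_general {d m r : ℕ} (u v : Fin d → ℂ)
    (A : Fin m → Matrix (Fin d) (Fin d) ℂ)
    (w : Fin (r + 1) → List (Fin m))
    (t : Fin (r + 1) → ℕ) (ht : ∀ j, 1 ≤ t j) :
    frobNorm (List.ofFn fun j : Fin (r + 1) =>
        ((w j).map A).prod * (vecMulVec u v) ^ (t j)).prod =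
      ‖v ⬝ᵥ u‖ ^ ((∑ j, t j) - (r + 1)) *
        (∏ j : Fin r, ‖v ⬝ᵥ (((w j.succ).map A).prod).mulVec u‖) *
        eucNorm ((((w 0).map A).prod).mulVec u) * eucNorm v := by
  have hexp : ∑ j, (t j - 1) = (∑ j, t j) - (r + 1) := by
    rw [Finset.sum_tsub_distrib _ fun j _ => ht j]
    simp
  simp_rw [mul_vecMulVec_pow _ _ _ (ht _)]
  rw [prod_ofFn_smul_vecMulVec, Finset.prod_pow_eq_pow_sum, hexp, ← smul_vecMulVec,
    frobNorm_vecMulVec, eucNorm_smul, norm_mul, norm_pow, norm_prod]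

/-- The Frobenius norm of the product `A_{w₀} A₀^{t₀} A_{w₁} A₀^{t₁} ⋯ A_{w_r} A₀^{t_r}`,
where `A₀ = u vᵀ` is rank one with `vᵀu ≠ 0` and `A_w` is the product of matrices along the
nonempty word `w`, equals
`|vᵀu|^{(∑ tⱼ) - (r+1)} ⬝ (∏_{j=1}^r |vᵀ A_{wⱼ} u|) ⬝ ‖A_{w₀} u‖₂ ⬝ ‖v‖₂`. -/
theorem frobNorm_word_product {d m r : ℕ} (u v : Fin d → ℂ) (huv : v ⬝ᵥ u ≠ 0)
    (A : Fin m → Matrix (Fin d) (Fin d) ℂ)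
    (w : Fin (r + 1) → List (Fin m)) (hw : ∀ j, w j ≠ [])
    (t : Fin (r + 1) → ℕ) (ht : ∀ j, 1 ≤ t j) :
    frobNorm (List.ofFn fun j : Fin (r + 1) =>
        ((w j).map A).prod * (vecMulVec u v) ^ (t j)).prod =
      ‖v ⬝ᵥ u‖ ^ ((∑ j, t j) - (r + 1)) *
        (∏ j : Fin r, ‖v ⬝ᵥ (((w j.succ).map A).prod).mulVec u‖) *
        eucNorm ((((w 0).map A).prod).mulVec u) * eucNorm v :=
  frobNorm_word_product_general u v A w t ht
end

section
/- Let ω ∈ {0,…,m-1}^ℕ be a sequence in which 0 appears infinitely often, decomposed as ω = w_0 0^{t_0} w_1 0^{t_1} w_2 0^{t_2} ⋯ where the words w_j contain no 0 and t_j ≥ 1. Suppose the frequency ρ_0 of the symbol 0 exists and for every return word w the exact frequency F_w exists. Then ∑_{w ∈ R} |w| · F_w ≤ 1 − ρ_0, where R is the set of return words. -/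
open Filter Topology ENNReal

/-- The word `a` occurs in `ω` at position `j`. -/
def OccursAt {m : ℕ} (a : List (Fin m)) (ω : ℕ → Fin m) (j : ℕ) : Prop :=
  ∀ i : Fin a.length, ω (j + i) = a.get i

/-- The word `a` has asymptotic frequency `ρ` in `ω`. -/
def HasFreq {m : ℕ} (a : List (Fin m)) (ω : ℕ → Fin m) (ρ : ℝ) : Prop :=
  Tendsto (fun n =>
      (((Finset.range n).filter fun j => ∀ i : Fin a.length, ω (j + i) = a.get i).card : ℝ) / n)
    atTop (𝓝 ρ)

/-- `w` is a return word (to `0`) of `ω`: a nonempty word without the symbol `0`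
such that `0w0` occurs in `ω`. -/
def IsReturnWord {m : ℕ} [NeZero m] (ω : ℕ → Fin m) (w : List (Fin m)) : Prop :=
  w ≠ [] ∧ (0 : Fin m) ∉ w ∧ ∃ j, OccursAt (0 :: w ++ [0]) ω j

/-! Each occurrence of `x w x` at position `j`, with `x ∉ w`, covers the `|w|` positions
`j + 1, …, j + |w|`, none of which carries `x`; and two such blocks cannot overlap, since each is
delimited by `x` and contains no `x`. So for finitely many such words, all of length at most `L`,
`∑ |w| · #{occurrences of x w x before n} + #{occurrences of x before n + L} ≤ n + L`.
Dividing by `n` and letting `n → ∞` gives `∑ |w| F_w + ρ₀ ≤ 1`. -/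

namespace OccursAt

variable {m : ℕ} {ω : ℕ → Fin m} {a b : List (Fin m)} {x : Fin m} {j : ℕ}

theorem getElem (h : OccursAt a ω j) {t : ℕ} (ht : t < a.length) : ω (j + t) = a[t] :=
  h ⟨t, ht⟩

theorem iff_getElem : OccursAt a ω j ↔ ∀ t (ht : t < a.length), ω (j + t) = a[t] :=
  ⟨getElem, fun h i => h i i.2⟩

theorem singleton_iff : OccursAt [x] ω j ↔ ω j = x := by
  simp [iff_getElem]

theorem append_iff : OccursAt (a ++ b) ω j ↔ OccursAt a ω j ∧ OccursAt b ω (j + a.length) := by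
  simp only [iff_getElem, List.length_append]
  refine ⟨fun h => ⟨fun t ht => ?_, fun t ht => ?_⟩, fun ⟨ha, hb⟩ t ht => ?_⟩
  · rw [h t (by omega), List.getElem_append_left ht]
  · rw [add_assoc, h _ (by omega), List.getElem_append_right (by omega)]
    simp
  · rcases lt_or_ge t a.length with hta | hta
    · rw [ha t hta, List.getElem_append_left hta]
    · rw [List.getElem_append_right hta, ← hb _ (by omega)]
      congr 1
      omega

theorem cons_iff : OccursAt (x :: a) ω j ↔ ω j = x ∧ OccursAt a ω (j + 1) := by
  rw [← List.singleton_append, append_iff, singleton_iff, List.length_singleton]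

theorem ne_of_not_mem (h : OccursAt a ω j) (hx : x ∉ a) {q : ℕ} (hjq : j ≤ q)
    (hq : q < j + a.length) : ω q ≠ x := by
  obtain ⟨t, rfl⟩ := Nat.exists_eq_add_of_le hjq
  rw [h.getElem (by omega)]
  exact fun hax => hx (hax ▸ List.getElem_mem _)


theorem cons_append_singleton_iff :
    OccursAt (x :: a ++ [x]) ω j ↔ ω j = x ∧ OccursAt a ω (j + 1) ∧ ω (j + 1 + a.length) = x := by
  rw [append_iff, cons_iff, singleton_iff, List.length_cons, and_assoc, add_right_comm, ← add_assoc]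

theorem eq_of_mem_block {w w' : List (Fin m)} {j' p : ℕ} (hw : x ∉ w) (hw' : x ∉ w')
    (h : OccursAt (x :: w ++ [x]) ω j) (h' : OccursAt (x :: w' ++ [x]) ω j')
    (hp : j < p) (hpw : p ≤ j + w.length) (hp' : j' < p) (hpw' : p ≤ j' + w'.length) :
    j = j' ∧ w = w' := by
  rw [cons_append_singleton_iff] at h h'
  obtain ⟨hj, hblock, hend⟩ := h
  obtain ⟨hj', hblock', hend'⟩ := h'
  have hjj' : j = j' := by
    rcases lt_trichotomy j j' with hlt | heq | hlt
    · exact absurd hj' (hblock.ne_of_not_mem hw (by omega) (by omega))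
    · exact heq
    · exact absurd hj (hblock'.ne_of_not_mem hw' (by omega) (by omega))
  subst hjj'
  have hlen : w.length = w'.length := by
    rcases lt_trichotomy w.length w'.length with hlt | heq | hlt
    · exact absurd hend (hblock'.ne_of_not_mem hw' (by omega) (by omega))
    · exact heq
    · exact absurd hend' (hblock.ne_of_not_mem hw (by omega) (by omega))
  exact ⟨rfl, List.ext_getElem hlen fun t ht ht' => by
    rw [← hblock.getElem ht, ← hblock'.getElem ht']⟩

end OccursAt

section Counting

variable {m : ℕ} {ω : ℕ → Fin m}

def occurrences (a : List (Fin m)) (ω : ℕ → Fin m) (n : ℕ) : Finset ℕ :=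
  (Finset.range n).filter fun j => ∀ i : Fin a.length, ω (j + i) = a.get i

theorem mem_occurrences {a : List (Fin m)} {n j : ℕ} :
    j ∈ occurrences a ω n ↔ j < n ∧ OccursAt a ω j := by
  simp [occurrences, OccursAt]

theorem occurrences_singleton (x : Fin m) (n : ℕ) :
    occurrences [x] ω n = (Finset.range n).filter fun k => ω k = x := by
  ext k
  simp [mem_occurrences, OccursAt.singleton_iff]

theorem sum_length_mul_card_occurrences_add_le {x : Fin m} {s : Finset (List (Fin m))}
    (hs : ∀ w ∈ s, x ∉ w) {L : ℕ} (hL : ∀ w ∈ s, w.length ≤ L) (n : ℕ) :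
    ∑ w ∈ s, w.length * (occurrences (x :: w ++ [x]) ω n).card
      + (occurrences [x] ω (n + L)).card ≤ n + L := by
  classical
  have hsigma : ∑ w ∈ s, w.length * (occurrences (x :: w ++ [x]) ω n).card
      = (s.sigma fun w => occurrences (x :: w ++ [x]) ω n ×ˢ Finset.range w.length).card := by
    simp [Finset.card_sigma, Finset.card_product, mul_comm]
  have hinj : (s.sigma fun w => occurrences (x :: w ++ [x]) ω n ×ˢ Finset.range w.length).card
      ≤ ((Finset.range (n + L)).filter fun k => ¬ω k = x).card := by
    refine Finset.card_le_card_of_injOn (fun p => p.2.1 + 1 + p.2.2) ?_ ?_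
    · rintro ⟨w, j, i⟩ hp
      simp only [Finset.coe_sigma, Set.mem_sigma_iff, Finset.mem_coe, Finset.mem_product,
        mem_occurrences, Finset.mem_range] at hp
      obtain ⟨hw, ⟨hjn, hocc⟩, hi⟩ := hp
      have hblock := (OccursAt.cons_append_singleton_iff.1 hocc).2.1
      simp only [Finset.coe_filter, Finset.mem_range, Set.mem_ofPred_eq]
      exact ⟨by linarith [hL w hw], hblock.ne_of_not_mem (hs w hw) (by omega) (by omega)⟩
    · rintro ⟨w, j, i⟩ hp ⟨w', j', i'⟩ hp' hpp'
      simp only [Finset.coe_sigma, Set.mem_sigma_iff, Finset.mem_coe, Finset.mem_product,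
        mem_occurrences, Finset.mem_range] at hp hp' hpp'
      obtain ⟨hw, ⟨-, hocc⟩, hi⟩ := hp
      obtain ⟨hw', ⟨-, hocc'⟩, hi'⟩ := hp'
      obtain ⟨rfl, rfl⟩ := OccursAt.eq_of_mem_block (hs w hw) (hs w' hw') hocc hocc'
        (p := j + 1 + i) (by omega) (by omega) (by omega) (by omega)
      obtain rfl : i = i' := by omega
      rfl
  rw [hsigma, occurrences_singleton]
  have hsplit := Finset.card_filter_add_card_filter_not (s := Finset.range (n + L))
    (p := fun k => ω k = x)
  rw [Finset.card_range] at hsplit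
  omega

end Counting

theorem tendsto_comp_add_div_natCast {f : ℕ → ℝ} {ρ : ℝ}
    (h : Tendsto (fun n => f n / n) atTop (𝓝 ρ)) (L : ℕ) :
    Tendsto (fun n => f (n + L) / n) atTop (𝓝 ρ) := by
  have hquot := (h.comp (tendsto_add_atTop_nat L)).div (tendsto_natCast_div_add_atTop (L : ℝ))
    one_ne_zero
  rw [div_one] at hquot
  refine hquot.congr' ?_
  filter_upwards [eventually_ne_atTop 0] with n hn
  have hnL : (n : ℝ) + L ≠ 0 := by positivity
  show f (n + L) / (n + L : ℕ) / (n / (n + L)) = f (n + L) / n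
  push_cast
  field_simp

namespace HasFreq

variable {m : ℕ} {ω : ℕ → Fin m}

theorem tendsto_card_occurrences_div {a : List (Fin m)} {ρ : ℝ} (h : HasFreq a ω ρ) :
    Tendsto (fun n => ((occurrences a ω n).card : ℝ) / n) atTop (𝓝 ρ) :=
  h

theorem nonneg {a : List (Fin m)} {ρ : ℝ} (h : HasFreq a ω ρ) : 0 ≤ ρ :=
  ge_of_tendsto' h fun _ => by positivity

theorem sum_length_mul_add_le_one {x : Fin m} {s : Finset (List (Fin m))} (hs : ∀ w ∈ s, x ∉ w)
    {F : List (Fin m) → ℝ} (hF : ∀ w ∈ s, HasFreq (x :: w ++ [x]) ω (F w))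
    {ρ : ℝ} (hρ : HasFreq [x] ω ρ) :
    ∑ w ∈ s, w.length * F w + ρ ≤ 1 := by
  set L := s.sup List.length
  have hlhs : Tendsto (fun n : ℕ => ∑ w ∈ s, (w.length : ℝ) *
        ((occurrences (x :: w ++ [x]) ω n).card / n) + (occurrences [x] ω (n + L)).card / n)
      atTop (𝓝 (∑ w ∈ s, w.length * F w + ρ)) :=
    (tendsto_finsetSum _ fun w hw => (hF w hw).tendsto_card_occurrences_div.const_mul _).add
      (tendsto_comp_add_div_natCast hρ.tendsto_card_occurrences_div L)
  have hrhs : Tendsto (fun n : ℕ => ((n + L : ℕ) : ℝ) / n) atTop (𝓝 1) :=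
    tendsto_comp_add_div_natCast (f := Nat.cast) (tendsto_natCast_div_add_atTop (0 : ℝ)
      |>.congr fun n => by rw [add_zero]) L
  refine le_of_tendsto_of_tendsto' hlhs hrhs fun n => ?_
  have hcount := sum_length_mul_card_occurrences_add_le (ω := ω) hs
    (fun w hw => Finset.le_sup (f := List.length) hw) n
  simp only [mul_div_assoc', ← Finset.sum_div, ← add_div]
  gcongr
  exact_mod_cast hcount

end HasFreq

theorem sum_length_mul_exact_freq_le_general {m : ℕ} [NeZero m] (ω : ℕ → Fin m)
    (ρ0 : ℝ) (h0 : HasFreq [0] ω ρ0)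
    (F : List (Fin m) → ℝ)
    (hF : ∀ w, IsReturnWord ω w → HasFreq (0 :: w ++ [0]) ω (F w)) :
    ∑' w : {w : List (Fin m) // IsReturnWord ω w},
        (w.1.length : ℝ≥0∞) * ENNReal.ofReal (F w.1) ≤ ENNReal.ofReal (1 - ρ0) := by
  refine ENNReal.summable.tsum_le_of_sum_le fun t => ?_
  have hreal : ∑ w ∈ t, (w.1.length : ℝ) * F w.1 ≤ 1 - ρ0 := by
    have := HasFreq.sum_length_mul_add_le_one (s := t.map (Function.Embedding.subtype _))
      (by simpa using fun w hw _ => hw.2.1) (by simpa using fun w hw _ => hF w hw) h0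
    rw [Finset.sum_map] at this
    simp only [Function.Embedding.coe_subtype] at this
    linarith
  calc ∑ w ∈ t, (w.1.length : ℝ≥0∞) * ENNReal.ofReal (F w.1)
      = ENNReal.ofReal (∑ w ∈ t, (w.1.length : ℝ) * F w.1) := by
        rw [ENNReal.ofReal_sum_of_nonneg fun w _ => mul_nonneg (Nat.cast_nonneg _)
          (hF w.1 w.2).nonneg]
        simp [ENNReal.ofReal_mul]
    _ ≤ ENNReal.ofReal (1 - ρ0) := ENNReal.ofReal_le_ofReal hreal

/-- If the symbol `0` occurs infinitely often in `ω`, the frequency `ρ₀` of `0` exists and the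
exact frequency `F_w = ρ_{0w0}` of every return word `w` exists, then
`∑_{w ∈ R} |w| F_w ≤ 1 - ρ₀`. -/
theorem sum_length_mul_exact_freq_le {m : ℕ} [NeZero m] (ω : ℕ → Fin m)
    (hinf : {n | ω n = 0}.Infinite)
    (ρ0 : ℝ) (h0 : HasFreq [0] ω ρ0)
    (F : List (Fin m) → ℝ)
    (hF : ∀ w, IsReturnWord ω w → HasFreq (0 :: w ++ [0]) ω (F w)) :
    ∑' w : {w : List (Fin m) // IsReturnWord ω w},
        (w.1.length : ℝ≥0∞) * ENNReal.ofReal (F w.1) ≤ ENNReal.ofReal (1 - ρ0) :=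
  sum_length_mul_exact_freq_le_general ω ρ0 h0 F hF
end

section
/- Let A_0 = 𝟙 𝟙' be the d×d all-ones matrix and A_1 a nonnegative invertible d×d matrix. Let ω = 0 1 0 1^2 0 1^3 0 ⋯ be the sequence whose n-th block is 0 followed by 1^n. Then the Lyapunov exponent lim_{n→∞} (1/n) log ‖A_{ω_0} A_{ω_1} ⋯ A_{ω_{n-1}}‖ exists and equals log ρ(A_1), the logarithm of the spectral radius of A_1. -/
/-!
For nonnegative `M`, the all-ones matrix `J = A₀` satisfies `J M J = ‖M‖ J`. Hence the product up
to the end of the `m`-th block of ones is `‖A₁‖ ‖A₁²‖ ⋯ ‖A₁^m‖ • J`, and `j` letters further into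
the next block its norm is `‖A₁‖ ⋯ ‖A₁^m‖ · d · ‖A₁^j‖`. By Gelfand's formula
`log ‖A₁^k‖ = k log ρ(A₁) + o(k)`; summing over `k ≤ m`, the errors add up to `o(m²)`, and the
position `n` is of order `m²/2`, so `log ‖P_n‖ = n log ρ(A₁) + o(n)`.
-/

open Filter Topology Matrix

/-- The entry-sum norm `‖A‖ = ∑ᵢⱼ |aᵢⱼ|`. -/
def entrySumNorm {d : ℕ} (A : Matrix (Fin d) (Fin d) ℝ) : ℝ := ∑ i, ∑ j, |A i j|

/-- Spectral radius of a real matrix: the supremum of the moduli of its complex eigenvalues. -/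
noncomputable def specRad {d : ℕ} (A : Matrix (Fin d) (Fin d) ℝ) : ℝ :=
  sSup {r : ℝ | ∃ μ : ℂ, μ ∈ spectrum ℂ (A.map Complex.ofReal) ∧ r = ‖μ‖}

/-- The product `A_{ω₀} A_{ω₁} ⋯ A_{ω_{n-1}}` of matrices selected along the sequence `ω`. -/
def prodAlong {d m : ℕ} (A : Fin m → Matrix (Fin d) (Fin d) ℝ) (ω : ℕ → Fin m) (n : ℕ) :
    Matrix (Fin d) (Fin d) ℝ :=
  (List.ofFn fun i : Fin n => A (ω i)).prod

open Classical in
/-- The sequence `0 1 0 1² 0 1³ 0 ⋯`: its `n`-th entry is `0` iff `n = k(k+3)/2` for some `k`. -/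
noncomputable def omegaBlocks (n : ℕ) : Fin 2 :=
  if ∃ k, 2 * n = k * (k + 3) then 0 else 1

open Finset

section Spectral

variable {𝔸 : Type*} [NormedRing 𝔸] [NormedAlgebra ℂ 𝔸] [CompleteSpace 𝔸] [Nontrivial 𝔸]

lemma sSup_norm_spectrum_eq_toReal_spectralRadius (a : 𝔸) :
    sSup {r : ℝ | ∃ μ ∈ spectrum ℂ a, r = ‖μ‖} = (spectralRadius ℂ a).toReal := by
  obtain ⟨μ₀, hμ₀, hρ⟩ := spectrum.exists_nnnorm_eq_spectralRadius a
  have hmax : IsGreatest {r : ℝ | ∃ μ ∈ spectrum ℂ a, r = ‖μ‖} ‖μ₀‖ := by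
    refine ⟨⟨μ₀, hμ₀, rfl⟩, ?_⟩
    rintro _ ⟨μ, hμ, rfl⟩
    have : (‖μ‖₊ : ENNReal) ≤ ‖μ₀‖₊ := hρ ▸ le_iSup₂ (α := ENNReal) μ hμ
    exact_mod_cast this
  rw [hmax.csSup_eq, ← hρ]
  rfl

lemma toReal_spectralRadius_pos {a : 𝔸} (ha : IsUnit a) : 0 < (spectralRadius ℂ a).toReal := by
  obtain ⟨μ₀, hμ₀, hρ⟩ := spectrum.exists_nnnorm_eq_spectralRadius a
  have hμ₀ne : μ₀ ≠ 0 := fun h => spectrum.zero_notMem ℂ ha (h ▸ hμ₀)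
  rw [← hρ]
  simpa using hμ₀ne

lemma tendsto_log_norm_pow_div {a : 𝔸} (ha : IsUnit a) :
    Tendsto (fun n : ℕ => Real.log ‖a ^ n‖ / n) atTop
      (𝓝 (Real.log (spectralRadius ℂ a).toReal)) := by
  obtain ⟨μ₀, -, hρ⟩ := spectrum.exists_nnnorm_eq_spectralRadius a
  have hgelfand : Tendsto (fun n : ℕ => ‖a ^ n‖ ^ (1 / n : ℝ)) atTop
      (𝓝 (spectralRadius ℂ a).toReal) := by
    refine ((ENNReal.tendsto_toReal ?_).comp
      (spectrum.pow_norm_pow_one_div_tendsto_nhds_spectralRadius a)).congr fun n => ?_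
    · rw [← hρ]; exact ENNReal.coe_ne_top
    · exact ENNReal.toReal_ofReal (by positivity)
  refine ((Real.continuousAt_log (toReal_spectralRadius_pos ha).ne').tendsto.comp
    hgelfand).congr fun n => ?_
  rw [Function.comp_apply, Real.log_rpow (norm_pos_iff.2 (ha.pow n).ne_zero), one_div,
    inv_mul_eq_div]

end Spectral

lemma tendsto_div_natCast_of_le_of_le_add {u v : ℕ → ℝ} {L C : ℝ}
    (hu : Tendsto (fun n : ℕ => u n / n) atTop (𝓝 L)) (hle : ∀ n, u n ≤ v n)
    (hle_add : ∀ n, v n ≤ u n + C) : Tendsto (fun n : ℕ => v n / n) atTop (𝓝 L) := by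
  have hC : Tendsto (fun n : ℕ => u n / n + C / n) atTop (𝓝 L) := by
    simpa using hu.add (tendsto_const_nhds.div_atTop tendsto_natCast_atTop_atTop)
  refine tendsto_of_tendsto_of_tendsto_of_le_of_le hu hC (fun n => ?_) (fun n => ?_)
  · exact div_le_div_of_nonneg_right (hle n) n.cast_nonneg
  · rw [← add_div]
    exact div_le_div_of_nonneg_right (hle_add n) n.cast_nonneg

section EntrySumNorm

variable {d : ℕ}

lemma entrySumNorm_eq_coe (M : Matrix (Fin d) (Fin d) ℝ) :
    entrySumNorm M = ((∑ i, ∑ j, ‖M i j‖₊ : NNReal) : ℝ) := by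
  simp [entrySumNorm]

lemma entrySumNorm_nonneg (M : Matrix (Fin d) (Fin d) ℝ) : 0 ≤ entrySumNorm M :=
  sum_nonneg fun _ _ => sum_nonneg fun _ _ => abs_nonneg _

lemma entrySumNorm_pos {M : Matrix (Fin d) (Fin d) ℝ} (hM : M ≠ 0) :
    0 < entrySumNorm M := by
  obtain ⟨i, j, hij⟩ : ∃ i j, M i j ≠ 0 := by
    by_contra! h
    exact hM (Matrix.ext h)
  calc 0 < |M i j| := abs_pos.2 hij
    _ ≤ ∑ j, |M i j| := single_le_sum (fun j _ => abs_nonneg (M i j)) (mem_univ j)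
    _ ≤ entrySumNorm M := single_le_sum (f := fun i => ∑ j, |M i j|)
      (fun i _ => sum_nonneg fun j _ => abs_nonneg _) (mem_univ i)

lemma entrySumNorm_smul (c : ℝ) (M : Matrix (Fin d) (Fin d) ℝ) :
    entrySumNorm (c • M) = |c| * entrySumNorm M := by
  simp [entrySumNorm, abs_mul, mul_sum]

lemma entrySumNorm_of_nonneg {M : Matrix (Fin d) (Fin d) ℝ} (hM : ∀ i j, 0 ≤ M i j) :
    entrySumNorm M = ∑ i, ∑ j, M i j := by
  simp only [entrySumNorm, abs_of_nonneg (hM _ _)]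

lemma ones_mul_mul_ones (M : Matrix (Fin d) (Fin d) ℝ) :
    (Matrix.of fun _ _ => (1 : ℝ)) * M * Matrix.of (fun _ _ => 1) =
      (∑ i, ∑ j, M i j) • Matrix.of fun _ _ => (1 : ℝ) := by
  ext i j
  simp only [Matrix.mul_apply, of_apply, one_mul, mul_one, Matrix.smul_apply, smul_eq_mul]
  exact sum_comm

lemma entrySumNorm_ones_mul {M : Matrix (Fin d) (Fin d) ℝ} (hM : ∀ i j, 0 ≤ M i j) :
    entrySumNorm ((Matrix.of fun _ _ => (1 : ℝ)) * M) = d * entrySumNorm M := by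
  rw [entrySumNorm_of_nonneg hM, entrySumNorm_of_nonneg fun i j => ?_]
  · simp only [Matrix.mul_apply, Matrix.of_apply, one_mul, sum_const, card_univ, Fintype.card_fin,
      nsmul_eq_mul]
    rw [sum_comm]
  · simpa [Matrix.mul_apply] using sum_nonneg fun k _ => hM k j

end EntrySumNorm

section LinftyNorm

attribute [local instance] Matrix.linftyOpNormedRing Matrix.linftyOpNormedAlgebra

variable {d : ℕ}

lemma nnnorm_map_ofReal (M : Matrix (Fin d) (Fin d) ℝ) :
    ‖M.map Complex.ofReal‖₊ = univ.sup fun i => ∑ j, ‖M i j‖₊ := by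
  simp [Matrix.linfty_opNNNorm_def, Complex.nnnorm_real]

lemma norm_map_ofReal_le_entrySumNorm (M : Matrix (Fin d) (Fin d) ℝ) :
    ‖M.map Complex.ofReal‖ ≤ entrySumNorm M := by
  rw [← coe_nnnorm, nnnorm_map_ofReal, entrySumNorm_eq_coe, NNReal.coe_le_coe]
  exact Finset.sup_le fun i _ => single_le_sum (f := fun i => ∑ j, ‖M i j‖₊) (by simp) (mem_univ i)

lemma entrySumNorm_le_mul_norm_map_ofReal (M : Matrix (Fin d) (Fin d) ℝ) :
    entrySumNorm M ≤ d * ‖M.map Complex.ofReal‖ := by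
  rw [← coe_nnnorm, nnnorm_map_ofReal, entrySumNorm_eq_coe]
  exact_mod_cast (sum_le_card_nsmul _ _ _ fun i _ => le_sup (f := fun i => ∑ j, ‖M i j‖₊)
    (mem_univ i)).trans_eq (by simp)

lemma specRad_eq_toReal_spectralRadius [NeZero d] (B : Matrix (Fin d) (Fin d) ℝ) :
    specRad B = (spectralRadius ℂ (B.map Complex.ofReal)).toReal :=
  sSup_norm_spectrum_eq_toReal_spectralRadius _

lemma tendsto_log_entrySumNorm_pow_div [NeZero d] {B : Matrix (Fin d) (Fin d) ℝ}
    (hB : IsUnit B) :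
    Tendsto (fun k : ℕ => Real.log (entrySumNorm (B ^ k)) / k) atTop
      (𝓝 (Real.log (specRad B))) := by
  have hmap : ∀ k : ℕ, (B ^ k).map Complex.ofReal = B.map Complex.ofReal ^ k := fun k =>
    map_pow (Complex.ofRealHom.mapMatrix) B k
  have hunit : IsUnit (B.map Complex.ofReal) := hB.map Complex.ofRealHom.mapMatrix
  have hnorm_pos : ∀ k : ℕ, 0 < ‖(B ^ k).map Complex.ofReal‖ := fun k => by
    rw [hmap]; exact norm_pos_iff.2 (hunit.pow k).ne_zero
  rw [specRad_eq_toReal_spectralRadius]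
  refine tendsto_div_natCast_of_le_of_le_add
    (u := fun k => Real.log ‖(B ^ k).map Complex.ofReal‖) (C := Real.log d)
    (by simpa only [hmap] using tendsto_log_norm_pow_div hunit) (fun k => ?_) (fun k => ?_)
  · exact Real.log_le_log (hnorm_pos k) (norm_map_ofReal_le_entrySumNorm _)
  · rw [add_comm, ← Real.log_mul (NeZero.ne _) (hnorm_pos k).ne']
    exact Real.log_le_log ((hnorm_pos k).trans_le (norm_map_ofReal_le_entrySumNorm _))
        (entrySumNorm_le_mul_norm_map_ofReal _)

end LinftyNorm

/-- Position of the first letter of the `m`-th block `1^(m+1)` of `omegaBlocks`. -/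
def blockStart : ℕ → ℕ
  | 0 => 1
  | m + 1 => blockStart m + (m + 2)

lemma two_mul_blockStart (m : ℕ) : 2 * blockStart m = m * (m + 3) + 2 := by
  induction m with
  | zero => rfl
  | succ m ih => rw [blockStart]; linarith

lemma blockStart_eq_sum_range (m : ℕ) : blockStart m = ∑ k ∈ range m, (k + 1) + (m + 1) := by
  induction m with
  | zero => rfl
  | succ m ih => rw [blockStart, ih, sum_range_succ]

lemma exists_eq_blockStart_add {M n : ℕ} (h : blockStart M ≤ n) :
    ∃ m ≥ M, ∃ j ≤ m + 1, n = blockStart m + j := by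
  induction n, h using Nat.le_induction with
  | base => exact ⟨M, le_rfl, 0, Nat.zero_le _, rfl⟩
  | succ n _ ih =>
    obtain ⟨m, hm, j, hj, rfl⟩ := ih
    rcases hj.lt_or_eq with hj | rfl
    · exact ⟨m, hm, j + 1, hj, rfl⟩
    · exact ⟨m + 1, hm.trans m.le_succ, 0, Nat.zero_le _, rfl⟩

lemma omegaBlocks_zero : omegaBlocks 0 = 0 :=
  if_pos ⟨0, rfl⟩

lemma omegaBlocks_blockStart_add {m j : ℕ} (hj : j ≤ m) : omegaBlocks (blockStart m + j) = 1 := by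
  refine if_neg fun ⟨k, hk⟩ => ?_
  -- `2 * (blockStart m + j)` lies strictly between `m * (m + 3)` and `(m + 1) * (m + 4)`.
  have := two_mul_blockStart m
  rcases le_or_gt k m with hkm | hkm <;> nlinarith

lemma omegaBlocks_blockStart_add_succ (m : ℕ) : omegaBlocks (blockStart m + (m + 1)) = 0 :=
  if_pos ⟨m + 1, by linarith [two_mul_blockStart m]⟩

section Products

variable {d : ℕ}

lemma prodAlong_succ {r : ℕ} (A : Fin r → Matrix (Fin d) (Fin d) ℝ) (ω : ℕ → Fin r) (n : ℕ) :
    prodAlong A ω (n + 1) = prodAlong A ω n * A (ω n) := by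
  rw [prodAlong, List.ofFn_succ', List.prod_concat]
  rfl

lemma prodAlong_add_of_forall_eq {r : ℕ} (A : Fin r → Matrix (Fin d) (Fin d) ℝ) {ω : ℕ → Fin r}
    {c : Fin r} {n j : ℕ} (h : ∀ i < j, ω (n + i) = c) :
    prodAlong A ω (n + j) = prodAlong A ω n * A c ^ j := by
  induction j with
  | zero => simp
  | succ j ih =>
    rw [← add_assoc, prodAlong_succ, ih fun i hi => h i (by omega), h j j.lt_succ_self, pow_succ,
      mul_assoc]

variable (A : Fin 2 → Matrix (Fin d) (Fin d) ℝ)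

lemma prodAlong_omegaBlocks_blockStart_add {m j : ℕ} (hj : j ≤ m + 1) :
    prodAlong A omegaBlocks (blockStart m + j) =
      prodAlong A omegaBlocks (blockStart m) * A 1 ^ j :=
  prodAlong_add_of_forall_eq A fun _ hi => omegaBlocks_blockStart_add (by omega)

lemma prodAlong_omegaBlocks_blockStart_succ (m : ℕ) :
    prodAlong A omegaBlocks (blockStart (m + 1)) =
      prodAlong A omegaBlocks (blockStart m) * A 1 ^ (m + 1) * A 0 := by
  rw [blockStart, show m + 2 = (m + 1) + 1 from rfl, ← add_assoc, prodAlong_succ,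
    omegaBlocks_blockStart_add_succ, prodAlong_omegaBlocks_blockStart_add A le_rfl]

variable {A}

lemma prodAlong_omegaBlocks_blockStart (hA0 : A 0 = Matrix.of fun _ _ => (1 : ℝ))
    (hA1 : ∀ i j, 0 ≤ A 1 i j) (m : ℕ) :
    prodAlong A omegaBlocks (blockStart m) =
      (∏ k ∈ range m, entrySumNorm (A 1 ^ (k + 1))) • A 0 := by
  induction m with
  | zero => simp [blockStart, prodAlong, omegaBlocks_zero]
  | succ m ih =>
    rw [prodAlong_omegaBlocks_blockStart_succ, ih, smul_mul_assoc, smul_mul_assoc, hA0,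
      ones_mul_mul_ones, ← entrySumNorm_of_nonneg (Matrix.pow_apply_nonneg hA1 _), smul_smul,
      prod_range_succ]

lemma entrySumNorm_prodAlong_omegaBlocks (hA0 : A 0 = Matrix.of fun _ _ => (1 : ℝ))
    (hA1 : ∀ i j, 0 ≤ A 1 i j) {m j : ℕ} (hj : j ≤ m + 1) :
    entrySumNorm (prodAlong A omegaBlocks (blockStart m + j)) =
      (∏ k ∈ range m, entrySumNorm (A 1 ^ (k + 1))) * (d * entrySumNorm (A 1 ^ j)) := by
  rw [prodAlong_omegaBlocks_blockStart_add A hj, prodAlong_omegaBlocks_blockStart hA0 hA1,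
    smul_mul_assoc, entrySumNorm_smul, hA0, entrySumNorm_ones_mul (Matrix.pow_apply_nonneg hA1 _),
    abs_of_nonneg (prod_nonneg fun _ _ => entrySumNorm_nonneg _)]

end Products

section Averaging

open Asymptotics

lemma isLittleO_natCast_of_tendsto_div {a : ℕ → ℝ} {L : ℝ}
    (ha : Tendsto (fun k : ℕ => a k / k) atTop (𝓝 L)) :
    (fun k : ℕ => a k - k * L) =o[atTop] fun k : ℕ => (k : ℝ) := by
  have hzero : ∀ᶠ k : ℕ in atTop, (k : ℝ) = 0 → a k - k * L = 0 := by
    filter_upwards [eventually_ne_atTop 0] with k hk h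
    exact absurd (Nat.cast_eq_zero.1 h) hk
  rw [isLittleO_iff_tendsto' hzero]
  refine (tendsto_sub_nhds_zero_iff.2 ha).congr' ?_
  filter_upwards [eventually_ne_atTop 0] with k hk
  field_simp

lemma isLittleO_sum_range_abs_sq {e : ℕ → ℝ} (he : e =o[atTop] fun k : ℕ => (k : ℝ)) :
    (fun M : ℕ => ∑ k ∈ range M, |e k|) =o[atTop] fun M : ℕ => (M : ℝ) ^ 2 := by
  have he' : (fun k => |e k|) =o[atTop] fun k : ℕ => (k : ℝ) + 1 :=
    he.abs_left.trans_isBigO <| IsBigO.of_bound 1 <| Eventually.of_forall fun k => by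
      simp only [Real.norm_eq_abs, one_mul, abs_of_nonneg (by positivity : (0 : ℝ) ≤ k + 1),
        Nat.abs_cast]
      linarith
  refine (he'.sum_range (fun k => by positivity) ?_).trans_isBigO
    (IsBigO.of_bound 1 <| Eventually.of_forall fun M => ?_)
  · refine tendsto_atTop_mono (fun M => ?_) tendsto_natCast_atTop_atTop
    simpa using card_nsmul_le_sum (range M) (fun k : ℕ => (k : ℝ) + 1) 1 fun k _ => by simp
  · rw [one_mul, Real.norm_of_nonneg (by positivity), Real.norm_of_nonneg (by positivity)]
    simpa [sq] using sum_le_card_nsmul (range M) (fun k : ℕ => (k : ℝ) + 1) M fun k hk => by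
      simpa using Nat.cast_le.2 (mem_range.1 hk)

lemma abs_sub_mul_le_of_eq_sum_blockStart {a F : ℕ → ℝ} {L c : ℝ}
    (hF : ∀ m j, j ≤ m + 1 → F (blockStart m + j) = ∑ k ∈ range m, a (k + 1) + c + a j)
    {m j : ℕ} (hj : j ≤ m + 1) :
    |F (blockStart m + j) - (blockStart m + j : ℕ) * L| ≤
      2 * ∑ k ∈ range (m + 2), |a k - k * L| + |c| + (m + 1) * |L| := by
  set S := ∑ k ∈ range (m + 2), |a k - k * L|
  have hsum : |∑ k ∈ range m, (a (k + 1) - (k + 1 : ℕ) * L)| ≤ S := calc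
    _ ≤ ∑ k ∈ range m, |a (k + 1) - (k + 1 : ℕ) * L| := abs_sum_le_sum_abs _ _
    _ ≤ ∑ k ∈ range (m + 1), |a k - k * L| := by
      rw [sum_range_succ' (fun k => |a k - k * L|)]
      exact le_add_of_nonneg_right (abs_nonneg _)
    _ ≤ S := sum_le_sum_of_subset_of_nonneg (range_subset_range.2 (m + 1).le_succ)
      fun _ _ _ => abs_nonneg _
  have hlast : |a j - j * L| ≤ S :=
    single_le_sum (f := fun k => |a k - k * L|) (fun _ _ => abs_nonneg _)
      (mem_range.2 (by omega))
  have hid : F (blockStart m + j) - (blockStart m + j : ℕ) * L =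
      ∑ k ∈ range m, (a (k + 1) - (k + 1 : ℕ) * L) + c + (a j - j * L) - (m + 1) * L := by
    rw [hF m j hj, blockStart_eq_sum_range, sum_sub_distrib, ← sum_mul]
    push_cast
    ring
  rw [hid]
  calc _ ≤ |∑ k ∈ range m, (a (k + 1) - (k + 1 : ℕ) * L)| + |c| + |a j - j * L|
        + |(m + 1) * L| := (abs_sub _ _).trans (by gcongr; exact abs_add_three _ _ _)
    _ ≤ 2 * S + |c| + (m + 1) * |L| := by
      rw [abs_mul, abs_of_nonneg (by positivity : (0 : ℝ) ≤ m + 1)]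
      linarith

lemma tendsto_div_of_eq_sum_blockStart {a F : ℕ → ℝ} {L c : ℝ}
    (ha : Tendsto (fun k : ℕ => a k / k) atTop (𝓝 L))
    (hF : ∀ m j, j ≤ m + 1 → F (blockStart m + j) = ∑ k ∈ range m, a (k + 1) + c + a j) :
    Tendsto (fun n : ℕ => F n / n) atTop (𝓝 L) := by
  have hlin : Tendsto (fun m : ℕ => (m : ℝ) + 2) atTop atTop :=
    tendsto_atTop_add_const_right _ _ tendsto_natCast_atTop_atTop
  have hbound : (fun m : ℕ => 2 * ∑ k ∈ range (m + 2), |a k - k * L| + |c| + (m + 1) * |L|)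
      =o[atTop] fun m : ℕ => ((m : ℝ) + 2) ^ 2 := by
    refine ((IsLittleO.add ?_ ?_).add ?_)
    · have hS := isLittleO_sum_range_abs_sq (isLittleO_natCast_of_tendsto_div ha)
      simpa [Function.comp_def] using
        (hS.comp_tendsto (tendsto_add_atTop_nat 2)).const_mul_left 2
    · exact isLittleO_const_left.2 <| .inr <| tendsto_norm_atTop_atTop.comp <|
        (tendsto_pow_atTop two_ne_zero).comp hlin
    · refine IsBigO.trans_isLittleO (g := fun m : ℕ => (m : ℝ) + 2) ?_
        ((isLittleO_pow_pow_atTop_of_lt one_lt_two).comp_tendsto hlin |>.congr_left (by simp))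
      refine IsBigO.of_bound |L| (Eventually.of_forall fun m => ?_)
      rw [norm_mul, Real.norm_of_nonneg (by positivity), Real.norm_of_nonneg (abs_nonneg L),
        Real.norm_of_nonneg (by positivity), mul_comm]
      gcongr
      linarith
  have hlittle : (fun n : ℕ => F n - n * L) =o[atTop] fun n : ℕ => (n : ℝ) := by
    refine IsLittleO.of_bound fun ε hε => ?_
    obtain ⟨M, hM⟩ := eventually_atTop.1 (hbound.bound (by positivity : 0 < ε / 4))
    filter_upwards [eventually_ge_atTop (blockStart M)] with n hn
    obtain ⟨m, hm, j, hj, rfl⟩ := exists_eq_blockStart_add hn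
    have hsq : ((m : ℝ) + 2) ^ 2 ≤ 4 * (blockStart m + j : ℕ) := by
      have h : (2 : ℝ) * blockStart m = m * (m + 3) + 2 := by exact_mod_cast two_mul_blockStart m
      push_cast
      nlinarith [(j.cast_nonneg : (0 : ℝ) ≤ j)]
    calc ‖F (blockStart m + j) - (blockStart m + j : ℕ) * L‖
        ≤ 2 * ∑ k ∈ range (m + 2), |a k - k * L| + |c| + (m + 1) * |L| :=
          abs_sub_mul_le_of_eq_sum_blockStart hF hj
      _ ≤ ε / 4 * ((m : ℝ) + 2) ^ 2 := (le_abs_self _).trans ((hM m hm).trans_eq (by simp))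
      _ ≤ ε * ‖((blockStart m + j : ℕ) : ℝ)‖ := by
        rw [Real.norm_natCast]
        nlinarith
  refine (zero_add L ▸ hlittle.tendsto_div_nhds_zero.add_const L).congr' ?_
  filter_upwards [eventually_ne_atTop 0] with n hn
  field_simp
  ring

end Averaging

/-- For `A₀` the all-ones matrix and `A₁` nonnegative and invertible, the Lyapunov exponent of
the matrix product along `0 1 0 1² 0 1³ ⋯` exists and equals `log ρ(A₁)`. -/
theorem lyapunov_blocks_eq_log_specRad {d : ℕ} (A : Fin 2 → Matrix (Fin d) (Fin d) ℝ)
    (hA0 : A 0 = Matrix.of fun _ _ => (1 : ℝ))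
    (hA1nn : ∀ i j, 0 ≤ A 1 i j) (hA1 : IsUnit (A 1)) :
    Tendsto (fun n => Real.log (entrySumNorm (prodAlong A omegaBlocks n)) / n)
      atTop (𝓝 (Real.log (specRad (A 1)))) := by
  obtain rfl | hd := Nat.eq_zero_or_pos d
  · simp [entrySumNorm, specRad, spectrum.of_subsingleton]
  have : NeZero d := ⟨hd.ne'⟩
  have hpos (k : ℕ) : 0 < entrySumNorm (A 1 ^ k) := entrySumNorm_pos (hA1.pow k).ne_zero
  refine tendsto_div_of_eq_sum_blockStart (c := Real.log d)
    (tendsto_log_entrySumNorm_pow_div hA1) fun m j hj => ?_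
  rw [entrySumNorm_prodAlong_omegaBlocks hA0 hA1nn hj,
    Real.log_mul (prod_pos fun k _ => hpos (k + 1)).ne' (mul_pos (Nat.cast_pos.2 hd) (hpos j)).ne',
    Real.log_mul (NeZero.ne _) (hpos j).ne', Real.log_prod fun k _ => (hpos (k + 1)).ne', add_assoc]
end

section
/- Let ω ∈ {0,1,…,m-1}^ℕ be generic for a shift-invariant ergodic measure ν with ν([0]) > 0, and decompose ω = w_0 0^{t_0} w_1 0^{t_1} ⋯ into return words w_j (not containing 0) and runs of zeros. Then lim_{M→∞} limsup_{n→∞} (1/n) ∑_{j : w_j ⊂ ω|_0^{n-1}, |w_j| > M} |w_j| = 0; i.e., long return words occupy asymptotically negligible density. -/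
/-!
Every position inside a return word of length `> M` begins or ends a `0`-free window of
length `M / 2 + 1`, so the density of long return words is at most twice the frequency with
which the orbit of `ω` visits the cylinder of `0`-free words of that length. By genericity this
frequency tends to the `ν`-measure of the cylinder. Since `ν[0] > 0`, ergodicity makes
`ν`-almost every point visit `[0]`, so these cylinders shrink to a `ν`-null set as `M → ∞`.
-/

open Filter Topology MeasureTheory

open Classical in
/-- The number of positions `k < n` lying in a maximal `0`-free block of `ω` of length `> M`
which is a complete return word contained in the prefix of length `n` (it is preceded by a `0`
and followed by a `0`). This counts `∑ |w_j|` over return words `w_j ≺ ω|₀^{n-1}` with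
`|w_j| > M` in the return-word decomposition of `ω`. -/
noncomputable def longReturnWordCount {m : ℕ} [NeZero m] (ω : ℕ → Fin m) (M n : ℕ) : ℕ :=
  ((Finset.range n).filter fun k => ∃ a b : ℕ, a ≤ k ∧ k < b ∧ b ≤ n ∧ 1 ≤ a ∧
      ω (a - 1) = 0 ∧ ω b = 0 ∧ (∀ i, a ≤ i → i < b → ω i ≠ 0) ∧ M < b - a).card

namespace Ergodic

variable {α : Type*} [MeasurableSpace α] {μ : Measure α} [IsFiniteMeasure μ] {f : α → α}
  {s : Set α}

theorem measure_forall_iterate_notMem_eq_zero (hf : Ergodic f μ) (hs : MeasurableSet s)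
    (hμs : μ s ≠ 0) : μ {x | ∀ n, f^[n] x ∉ s} = 0 := by
  set U := ⋃ n, f^[n] ⁻¹' s
  have hU : MeasurableSet U := .iUnion fun n => hs.preimage (hf.measurable.iterate n)
  have hfU : f ⁻¹' U ⊆ U := by
    rintro x ⟨_, ⟨n, rfl⟩, hx⟩
    exact Set.mem_iUnion.2 ⟨n + 1, by rwa [Set.mem_preimage, Function.iterate_succ_apply]⟩
  rcases hf.ae_empty_or_univ_of_preimage_ae_le hU.nullMeasurableSet hfU.eventuallyLE with
    hU0 | hU1
  · exact absurd (measure_mono_null (Set.subset_iUnion_of_subset 0 subset_rfl)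
      (ae_eq_empty.1 hU0)) hμs
  · have hcompl : {x | ∀ n, f^[n] x ∉ s} = Uᶜ := by ext; simp [U]
    rw [hcompl]
    exact ae_eq_univ.1 hU1

end Ergodic

open Classical in
theorem tendsto_card_filter_mem_div_of_isClopen {X : Type*} [TopologicalSpace X]
    [MeasurableSpace X] [OpensMeasurableSpace X] (ν : Measure X) (x : ℕ → X)
    (hgen : ∀ f : C(X, ℝ),
      Tendsto (fun n => (∑ k ∈ Finset.range n, f (x k)) / n) atTop (𝓝 (∫ y, f y ∂ν)))
    {S : Set X} (hS : IsClopen S) :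
    Tendsto (fun n : ℕ => ((Finset.range n).filter (x · ∈ S)).card / (n : ℝ)) atTop
      (𝓝 (ν.real S)) := by
  let indicatorS : C(X, ℝ) :=
    ⟨S.indicator fun _ => 1, continuous_indicator (by simp [hS]) continuous_const.continuousOn⟩
  have hint : ∫ y, indicatorS y ∂ν = ν.real S := by
    simpa [indicatorS] using integral_indicator_const (μ := ν) (1 : ℝ) hS.isOpen.measurableSet
  have hsum (n : ℕ) : ∑ k ∈ Finset.range n, indicatorS (x k) =
      ((Finset.range n).filter (x · ∈ S)).card := by
    simp [indicatorS, Set.indicator_apply, Finset.sum_boole]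
  simpa only [hsum, hint] using hgen indicatorS

section Cylinders

variable {A : Type*}

def avoidingCylinder (a : A) (h : ℕ) : Set (ℕ → A) := {y | ∀ i < h, y i ≠ a}

theorem antitone_avoidingCylinder (a : A) : Antitone (avoidingCylinder a) :=
  fun _ _ hle _ hy i hi => hy i (hi.trans_le hle)

theorem avoidingCylinder_eq_biInter (a : A) (h : ℕ) :
    avoidingCylinder a h = ⋂ i ∈ Finset.range h, (fun y : ℕ → A => y i) ⁻¹' {a}ᶜ := by
  ext; simp [avoidingCylinder]

theorem isClopen_avoidingCylinder [TopologicalSpace A] [DiscreteTopology A] (a : A) (h : ℕ) :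
    IsClopen (avoidingCylinder a h) := by
  rw [avoidingCylinder_eq_biInter]
  exact isClopen_biInter_finset fun i _ => (isClopen_discrete _).preimage (continuous_apply i)

theorem iterate_shift_apply (y : ℕ → A) (k i : ℕ) :
    (fun y n => y (n + 1))^[k] y i = y (i + k) := by
  induction k generalizing i with
  | zero => rfl
  | succ k ih => rw [Function.iterate_succ_apply', ih, Nat.add_right_comm]; rfl

theorem measurableSet_avoidingCylinder [MeasurableSpace A] [MeasurableSingletonClass A]
    (a : A) (h : ℕ) : MeasurableSet (avoidingCylinder a h) := by
  rw [avoidingCylinder_eq_biInter]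
  exact Finset.measurableSet_biInter _ fun i _ =>
    (measurableSet_singleton a).compl.preimage (measurable_pi_apply i)

theorem Ergodic.tendsto_measure_avoidingCylinder [MeasurableSpace A]
    [MeasurableSingletonClass A] {ν : Measure (ℕ → A)} [IsFiniteMeasure ν]
    (hν : Ergodic (fun y n => y (n + 1)) ν) {a : A}
    (ha : 0 < ν {y | y 0 = a}) : Tendsto (fun h => ν (avoidingCylinder a h)) atTop (𝓝 0) := by
  have hnull : ν (⋂ h, avoidingCylinder a h) = 0 := by
    have hvisit := hν.measure_forall_iterate_notMem_eq_zero
      ((measurableSet_singleton a).preimage (measurable_pi_apply 0)) ha.ne'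
    convert hvisit using 2
    ext y
    simp only [Set.mem_iInter, avoidingCylinder, Set.mem_ofPred_eq, Set.mem_preimage,
      Set.mem_singleton_iff, iterate_shift_apply, zero_add]
    exact ⟨fun hy n => hy (n + 1) n n.lt_succ_self, fun hy _ n _ => hy n⟩
  rw [← hnull]
  exact tendsto_measure_iInter_atTop
    (fun h => (measurableSet_avoidingCylinder a h).nullMeasurableSet)
    (antitone_avoidingCylinder a) ⟨0, measure_ne_top _ _⟩

end Cylinders

open Classical in
theorem longReturnWordCount_le_two_mul {m : ℕ} [NeZero m] (ω : ℕ → Fin m) (M n : ℕ) :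
    longReturnWordCount ω M n ≤ 2 * ((Finset.range n).filter
      fun k => (fun i => ω (i + k)) ∈ avoidingCylinder 0 (M / 2 + 1)).card := by
  set F := (Finset.range n).filter
    fun k => (fun i => ω (i + k)) ∈ avoidingCylinder 0 (M / 2 + 1)
  -- a window of length `M / 2 + 1` fits either after or before any position of a long block
  have hsub : (Finset.range n).filter (fun k => ∃ a b : ℕ, a ≤ k ∧ k < b ∧ b ≤ n ∧
      1 ≤ a ∧ ω (a - 1) = 0 ∧ ω b = 0 ∧ (∀ i, a ≤ i → i < b → ω i ≠ 0) ∧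
      M < b - a)
      ⊆ F ∪ F.image (· + M / 2) := by
    intro p hp
    simp only [Finset.mem_filter, Finset.mem_range] at hp
    obtain ⟨hpn, a, b, hap, hpb, hbn, -, -, -, hfree, hM⟩ := hp
    by_cases hforward : M / 2 + 1 ≤ b - p
    · refine Finset.mem_union_left _ (Finset.mem_filter.2 ⟨Finset.mem_range.2 hpn, ?_⟩)
      exact fun i hi => hfree _ (by omega) (by omega)
    · refine Finset.mem_union_right _ (Finset.mem_image.2 ⟨p - M / 2, ?_, by omega⟩)
      refine Finset.mem_filter.2 ⟨Finset.mem_range.2 (by omega), ?_⟩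
      exact fun i hi => hfree _ (by omega) (by omega)
  calc longReturnWordCount ω M n
    _ ≤ (F ∪ F.image (· + M / 2)).card := Finset.card_le_card hsub
    _ ≤ F.card + (F.image (· + M / 2)).card := Finset.card_union_le _ _
    _ ≤ 2 * F.card := by linarith [F.card_image_le (f := (· + M / 2))]

theorem limsup_mem_Icc_of_le_of_tendsto {ι : Type*} {l : Filter ι} [l.NeBot] {u v : ι → ℝ}
    {L : ℝ} (hu : ∀ i, 0 ≤ u i) (huv : ∀ i, u i ≤ v i) (hv : Tendsto v l (𝓝 L)) :
    limsup u l ∈ Set.Icc 0 L := by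
  have hbdd : IsBoundedUnder (· ≤ ·) l u :=
    hv.isBoundedUnder_le.mono_le (Eventually.of_forall huv)
  refine ⟨le_limsup_of_frequently_le (Frequently.of_forall hu) hbdd, ?_⟩
  calc limsup u l ≤ limsup v l :=
        limsup_le_limsup (Eventually.of_forall huv)
          (isBoundedUnder_of ⟨0, hu⟩).isCoboundedUnder_le hv.isBoundedUnder_le
    _ = L := hv.limsup_eq

/-- If `ω` is generic for a shift-invariant ergodic measure `ν` with `ν([0]) > 0`, then the long
return words in its decomposition occupy asymptotically negligible density:
`lim_{M→∞} limsup_n (1/n) ∑_{w_j ≺ ω|₀^{n-1}, |w_j| > M} |w_j| = 0`. -/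
theorem long_return_words_negligible {m : ℕ} [NeZero m] (ω : ℕ → Fin m)
    (ν : Measure (ℕ → Fin m)) [IsProbabilityMeasure ν]
    (hν : Ergodic (fun y n => y (n + 1)) ν)
    (hgen : ∀ f : C(ℕ → Fin m, ℝ),
      Tendsto (fun n => (∑ k ∈ Finset.range n, f (fun i => ω (i + k))) / n)
        atTop (𝓝 (∫ y, f y ∂ν)))
    (h0 : 0 < ν {y | y 0 = 0}) :
    Tendsto (fun M => limsup (fun n => (longReturnWordCount ω M n : ℝ) / n) atTop)
      atTop (𝓝 0) := by
  have hwindow : Tendsto (fun M : ℕ => M / 2 + 1) atTop atTop :=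
    tendsto_atTop_atTop.2 fun b => ⟨2 * b, fun M hM => by omega⟩
  have hcyl :
      Tendsto (fun M : ℕ => 2 * ν.real (avoidingCylinder 0 (M / 2 + 1))) atTop (𝓝 0) := by
    simpa [measureReal_def] using ((ENNReal.tendsto_toReal ENNReal.zero_ne_top).comp
      ((hν.tendsto_measure_avoidingCylinder h0).comp hwindow)).const_mul 2
  have hbound (M : ℕ) := limsup_mem_Icc_of_le_of_tendsto
    (u := fun n => (longReturnWordCount ω M n : ℝ) / n) (fun n => by positivity)
    (fun n => by
      rw [← mul_div_assoc]
      exact div_le_div_of_nonneg_right (by exact_mod_cast longReturnWordCount_le_two_mul ω M n)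
        n.cast_nonneg)
    ((tendsto_card_filter_mem_div_of_isClopen ν (fun k i => ω (i + k)) hgen
      (isClopen_avoidingCylinder 0 (M / 2 + 1))).const_mul 2)
  exact tendsto_of_tendsto_of_tendsto_of_le_of_le tendsto_const_nhds hcyl
    (fun M => (hbound M).1) (fun M => (hbound M).2)
end

section
/- Let ω be a sequence with finite return word set R (all return words to 0), let ℓ = max{|w| : w ∈ R}, and suppose the frequency ν([w]) exists for each w ∈ R. For w ∈ R define S_w^{(0)} = ν([w]) and S_w^{(j)} = ∑_{w ≺ w' ≺ ⋯ ≺ w^{(j)}} N_w(w') N_{w'}(w'') ⋯ N_{w^{(j-1)}}(w^{(j)}) ν([w^{(j)}]) for 1 ≤ j ≤ ℓ − |w| (sum over chains of return words each a proper subword of the next), and S_w^{(j)} = 0 for j > ℓ − |w|. Then the exact frequency F_w exists and F_w = ∑_{j=0}^{ℓ−|w|} (−1)^j S_w^{(j)}. -/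
open Filter Topology

/-- `NOcc u v` is the number of occurrences of the word `u` in the word `v`. -/
def NOcc {m : ℕ} (u v : List (Fin m)) : ℕ :=
  ((Finset.range v.length).filter fun i => (v.drop i).take u.length = u).card

open Classical in
/-- `Schain R ν j w` is the inclusion–exclusion sum
`S_w^{(j)} = ∑_{w ≺ w' ≺ ⋯ ≺ w^{(j)}} N_w(w') ⋯ N_{w^{(j-1)}}(w^{(j)}) ν([w^{(j)}])`
over chains of return words in `R`, each a proper subword of the next
(`S_w^{(0)} = ν([w])`). -/
noncomputable def Schain {m : ℕ} (R : Finset (List (Fin m))) (ν : List (Fin m) → ℝ) :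
    ℕ → List (Fin m) → ℝ
  | 0, w => ν w
  | j + 1, w =>
      ∑ w' ∈ R.filter (fun w' => w <:+: w' ∧ w ≠ w'), (NOcc w w' : ℝ) * Schain R ν j w'

/-!
Since `0` occurs infinitely often, `ω` is cut by its zeros into blocks `0w'0` with `w' ∈ R`, and
every occurrence of a return word `u` after the first zero lies inside exactly one block; a block
`0w'0` contains `N_u(w')` of them. Counting occurrences in `[0, n)` up to a bounded error and
dividing by `n` thus gives `ν([u]) = F_u + ∑_{u ≺ w'} N_u(w') F_{w'}`. This triangular system is
solved by downward induction on `|u|`, and unfolding the recursion yields the alternating sum of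
the chain sums `S_u^{(j)}`.
-/

lemma consecutive_eq_of_overlap {Z : ℕ → Prop} {p₁ q₁ p₂ q₂ k : ℕ} (hp₁ : Z p₁) (hq₁ : Z q₁)
    (hgap₁ : ∀ i, p₁ < i → i < q₁ → ¬ Z i) (hp₂ : Z p₂) (hq₂ : Z q₂)
    (hgap₂ : ∀ i, p₂ < i → i < q₂ → ¬ Z i) (hk₁ : p₁ < k ∧ k < q₁) (hk₂ : p₂ < k ∧ k < q₂) :
    p₁ = p₂ ∧ q₁ = q₂ := by
  constructor
  · by_contra h
    rcases Nat.lt_or_gt_of_ne h with h | h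
    · exact hgap₁ p₂ h (by omega) hp₂
    · exact hgap₂ p₁ h (by omega) hp₁
  · by_contra h
    rcases Nat.lt_or_gt_of_ne h with h | h
    · exact hgap₂ q₁ (by omega) h hq₁
    · exact hgap₁ q₂ (by omega) h hq₂

section ChainSums

variable {m : ℕ}

lemma NOcc_eq_zero_of_not_infix {u v : List (Fin m)} (h : ¬ u <:+: v) : NOcc u v = 0 := by
  rw [NOcc, Finset.card_eq_zero, Finset.filter_eq_empty_iff]
  rintro i - hi
  exact h (hi ▸ (List.take_prefix _ _).isInfix.trans (List.drop_suffix _ _).isInfix)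

lemma NOcc_self {u : List (Fin m)} (hu : u ≠ []) : NOcc u u = 1 := by
  rw [NOcc, Finset.card_eq_one]
  refine ⟨0, Finset.eq_singleton_iff_unique_mem.2 ⟨?_, fun i hi => ?_⟩⟩
  · simpa using List.length_pos_iff.2 hu
  · have hlen := congrArg List.length (Finset.mem_filter.1 hi).2
    simp only [List.length_take, List.length_drop] at hlen
    have := List.length_pos_iff.2 hu
    omega

variable (R : Finset (List (Fin m))) (ν : List (Fin m) → ℝ)

def properSuperwords (w : List (Fin m)) : Finset (List (Fin m)) :=
  R.filter fun w' => w <:+: w' ∧ w ≠ w'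

lemma properSuperwords_subset (w : List (Fin m)) : properSuperwords R w ⊆ R :=
  Finset.filter_subset _ _

variable {R} in
lemma length_lt_of_mem_properSuperwords {w w' : List (Fin m)}
    (h : w' ∈ properSuperwords R w) : w.length < w'.length := by
  obtain ⟨-, hinfix, hne⟩ := Finset.mem_filter.1 h
  exact lt_of_le_of_ne hinfix.length_le fun hlen => hne (hinfix.eq_of_length hlen)

variable {R} in
lemma sub_length_lt_of_mem_properSuperwords {L : ℕ} (hL : ∀ u ∈ R, u.length ≤ L)
    {w w' : List (Fin m)} (h : w' ∈ properSuperwords R w) :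
    L - w'.length < L - w.length := by
  have := length_lt_of_mem_properSuperwords h
  have := hL w' (properSuperwords_subset R w h)
  omega

lemma Schain_succ (j : ℕ) (w : List (Fin m)) :
    Schain R ν (j + 1) w = ∑ w' ∈ properSuperwords R w, (NOcc w w' : ℝ) * Schain R ν j w' :=
  rfl

lemma Schain_eq_zero_of_lt {L : ℕ} (hL : ∀ u ∈ R, u.length ≤ L) :
    ∀ {j : ℕ} {w : List (Fin m)}, L - w.length < j → Schain R ν j w = 0
  | 0, _, hj => absurd hj (Nat.not_lt_zero _)
  | j + 1, _, hj => Finset.sum_eq_zero fun w' hw' => by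
      have := sub_length_lt_of_mem_properSuperwords hL hw'
      rw [Schain_eq_zero_of_lt hL (j := j) (by omega), mul_zero]

noncomputable def altChainSum (L : ℕ) (w : List (Fin m)) : ℝ :=
  ∑ j ∈ Finset.range (L - w.length + 1), (-1 : ℝ) ^ j * Schain R ν j w

lemma altChainSum_eq_sub {L : ℕ} (hL : ∀ u ∈ R, u.length ≤ L) (w : List (Fin m)) :
    altChainSum R ν L w =
      ν w - ∑ w' ∈ properSuperwords R w, (NOcc w w' : ℝ) * altChainSum R ν L w' := by
  have htail : ∀ w' ∈ properSuperwords R w, altChainSum R ν L w' =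
      ∑ j ∈ Finset.range (L - w.length), (-1 : ℝ) ^ j * Schain R ν j w' := by
    intro w' hw'
    have := sub_length_lt_of_mem_properSuperwords hL hw'
    refine Finset.sum_subset (Finset.range_subset_range.2 (by omega)) fun j _ hj => ?_
    rw [Finset.mem_range] at hj
    rw [Schain_eq_zero_of_lt R ν hL (by omega), mul_zero]
  rw [Finset.sum_congr rfl fun w' hw' => by rw [htail w' hw'], altChainSum,
    Finset.sum_range_succ']
  simp only [Schain_succ, pow_succ, Finset.mul_sum, Finset.sum_comm (s := Finset.range _)]
  simp only [pow_zero, one_mul, Schain, sub_eq_neg_add, ← Finset.sum_neg_distrib]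
  congr 1
  refine Finset.sum_congr rfl fun _ _ => Finset.sum_congr rfl fun _ _ => by ring

variable {R} in
lemma sum_NOcc_mul_eq_add {u : List (Fin m)} (hu : u ∈ R) (hne : u ≠ []) (f : List (Fin m) → ℝ) :
    ∑ w' ∈ R, (NOcc u w' : ℝ) * f w' =
      f u + ∑ w' ∈ properSuperwords R u, (NOcc u w' : ℝ) * f w' := by
  rw [← Finset.add_sum_erase R _ hu, NOcc_self hne, Nat.cast_one, one_mul]
  refine congrArg _ (Finset.sum_subset (fun w' hw' => ?_) fun w' hw' hw'u => ?_).symm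
  · obtain ⟨hw'R, -, hne⟩ := Finset.mem_filter.1 hw'
    exact Finset.mem_erase.2 ⟨Ne.symm hne, hw'R⟩
  · obtain ⟨hne, hw'R⟩ := Finset.mem_erase.1 hw'
    have : ¬ u <:+: w' := fun h => hw'u (Finset.mem_filter.2 ⟨hw'R, h, Ne.symm hne⟩)
    rw [NOcc_eq_zero_of_not_infix this, Nat.cast_zero, zero_mul]

end ChainSums

section Occurrences

variable {m : ℕ} {ω : ℕ → Fin m}

-- The instance used inside `HasFreq`, so that `hasFreq_iff_tendsto_occCount` holds by `Iff.rfl`.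
instance (a : List (Fin m)) (ω : ℕ → Fin m) : DecidablePred (OccursAt a ω) := fun _ =>
  inferInstanceAs (Decidable (∀ _ : Fin a.length, _))

def window (ω : ℕ → Fin m) (s L : ℕ) : List (Fin m) :=
  List.ofFn fun r : Fin L => ω (s + r)

@[simp]
lemma length_window (ω : ℕ → Fin m) (s L : ℕ) : (window ω s L).length = L :=
  List.length_ofFn

lemma occursAt_iff_getElem {a : List (Fin m)} {j : ℕ} :
    OccursAt a ω j ↔ ∀ r (hr : r < a.length), ω (j + r) = a[r] :=
  ⟨fun h r hr => h ⟨r, hr⟩, fun h i => h i i.2⟩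

lemma occursAt_iff_window_eq {a : List (Fin m)} {j : ℕ} :
    OccursAt a ω j ↔ window ω j a.length = a := by
  rw [occursAt_iff_getElem, window, List.ext_get_iff]
  simp

lemma occursAt_append {a b : List (Fin m)} {j : ℕ} :
    OccursAt (a ++ b) ω j ↔ OccursAt a ω j ∧ OccursAt b ω (j + a.length) := by
  simp only [occursAt_iff_getElem, List.length_append]
  constructor
  · intro h
    refine ⟨fun r hr => ?_, fun r hr => ?_⟩
    · rw [h r (by omega), List.getElem_append_left hr]
    · rw [add_assoc, h _ (by omega), List.getElem_append_right (by omega)]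
      simp
  · rintro ⟨ha, hb⟩ r hr
    by_cases hra : r < a.length
    · rw [ha r hra, List.getElem_append_left hra]
    · rw [List.getElem_append_right (by omega), ← hb _ (by omega)]
      congr 1
      omega

lemma occursAt_singleton {x : Fin m} {j : ℕ} : OccursAt [x] ω j ↔ ω j = x := by
  simp [occursAt_iff_getElem]

lemma occursAt_sandwich_iff {x : Fin m} {w : List (Fin m)} {p : ℕ} :
    OccursAt (x :: w ++ [x]) ω p ↔
      ω p = x ∧ OccursAt w ω (p + 1) ∧ ω (p + 1 + w.length) = x := by
  rw [← List.singleton_append, occursAt_append, occursAt_append, occursAt_singleton,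
    occursAt_singleton, List.length_append, List.length_singleton, and_assoc, ← add_assoc]

lemma OccursAt.take_drop {v : List (Fin m)} {j : ℕ} (h : OccursAt v ω j) (i k : ℕ) :
    OccursAt ((v.drop i).take k) ω (j + i) := by
  rw [occursAt_iff_getElem] at h ⊢
  intro r hr
  simp only [List.length_take, List.length_drop] at hr
  rw [List.getElem_take, List.getElem_drop, add_assoc, h]

lemma OccursAt.apply_ne {w : List (Fin m)} {j r : ℕ} {x : Fin m} (h : OccursAt w ω j)
    (hx : x ∉ w) (hr : r < w.length) : ω (j + r) ≠ x := by
  rw [occursAt_iff_getElem.1 h r hr]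
  exact fun hxr => hx (hxr ▸ List.getElem_mem hr)

lemma window_drop_take {s L i k : ℕ} (h : i + k ≤ L) :
    ((window ω s L).drop i).take k = window ω (s + i) k := by
  apply List.ext_getElem
  · simp only [List.length_take, List.length_drop, length_window]
    omega
  · intro r _ _
    simp [window, add_assoc]

lemma add_length_le_of_drop_take_eq {v w : List (Fin m)} {i : ℕ} (hw : w ≠ [])
    (h : (v.drop i).take w.length = w) : i + w.length ≤ v.length := by
  have hlen := congrArg List.length h
  simp only [List.length_take, List.length_drop] at hlen
  have := List.length_pos_iff.2 hw
  omega

def occCount (a : List (Fin m)) (ω : ℕ → Fin m) (n : ℕ) : ℕ :=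
  ((Finset.range n).filter (OccursAt a ω)).card

lemma hasFreq_iff_tendsto_occCount {a : List (Fin m)} {ρ : ℝ} :
    HasFreq a ω ρ ↔ Tendsto (fun n => (occCount a ω n : ℝ) / n) atTop (𝓝 ρ) :=
  Iff.rfl

lemma occCount_add_le (a : List (Fin m)) (n k : ℕ) :
    occCount a ω (n + k) ≤ occCount a ω n + k := by
  rw [occCount, Finset.range_add_eq_union, Finset.filter_union]
  refine (Finset.card_union_le _ _).trans (add_le_add le_rfl ?_)
  exact (Finset.card_filter_le _ _).trans (by simp)

end Occurrences

section Blocks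

variable {m : ℕ} [NeZero m] {ω : ℕ → Fin m}

lemma OccursAt.ne_zero_of_sandwich {w : List (Fin m)} {p : ℕ}
    (h : OccursAt (0 :: w ++ [0]) ω p) (h0 : (0 : Fin m) ∉ w) :
    ∀ k, p < k → k < p + 1 + w.length → ω k ≠ 0 := by
  intro k hpk hkq
  have := (occursAt_sandwich_iff.1 h).2.1.apply_ne h0 (r := k - (p + 1)) (by omega)
  rwa [Nat.add_sub_cancel' (by omega)] at this

lemma eq_of_sandwich_of_sandwich {w₁ w₂ : List (Fin m)} {p₁ p₂ k : ℕ}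
    (h₁ : OccursAt (0 :: w₁ ++ [0]) ω p₁) (h01 : (0 : Fin m) ∉ w₁)
    (h₂ : OccursAt (0 :: w₂ ++ [0]) ω p₂) (h02 : (0 : Fin m) ∉ w₂)
    (hk₁ : p₁ < k ∧ k < p₁ + 1 + w₁.length) (hk₂ : p₂ < k ∧ k < p₂ + 1 + w₂.length) :
    p₁ = p₂ ∧ w₁ = w₂ := by
  obtain ⟨rfl, hlen⟩ := consecutive_eq_of_overlap (Z := fun i => ω i = 0)
    (occursAt_sandwich_iff.1 h₁).1 (occursAt_sandwich_iff.1 h₁).2.2 (h₁.ne_zero_of_sandwich h01)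
    (occursAt_sandwich_iff.1 h₂).1 (occursAt_sandwich_iff.1 h₂).2.2 (h₂.ne_zero_of_sandwich h02)
    hk₁ hk₂
  refine ⟨rfl, ?_⟩
  rw [← occursAt_iff_window_eq.1 (occursAt_sandwich_iff.1 h₁).2.1,
    ← occursAt_iff_window_eq.1 (occursAt_sandwich_iff.1 h₂).2.1, Nat.add_left_cancel hlen]

lemma occursAt_sandwich_window {p q : ℕ} (hp : ω p = 0) (hq : ω q = 0) (hpq : p < q)
    (hgap : ∀ k, p < k → k < q → ω k ≠ 0) :
    OccursAt (0 :: window ω (p + 1) (q - p - 1) ++ [0]) ω p ∧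
      (0 : Fin m) ∉ window ω (p + 1) (q - p - 1) := by
  refine ⟨occursAt_sandwich_iff.2 ⟨hp, occursAt_iff_window_eq.2 ?_, ?_⟩, ?_⟩
  · rw [length_window]
  · rwa [length_window, show p + 1 + (q - p - 1) = q by omega]
  · rw [window, List.mem_ofFn]
    rintro ⟨r, hr⟩
    exact hgap (p + 1 + r) (by omega) (by omega) hr

lemma exists_sandwich_of_occursAt (hinf : {n | ω n = 0}.Infinite) {p₀ j : ℕ} (hp₀ : ω p₀ = 0)
    (hp₀j : p₀ < j) {w : List (Fin m)} (hw : OccursAt w ω j) (h0w : (0 : Fin m) ∉ w) :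
    ∃ w' p, OccursAt (0 :: w' ++ [0]) ω p ∧ (0 : Fin m) ∉ w' ∧ p < j ∧
      (w'.drop (j - p - 1)).take w.length = w := by
  set p := Nat.findGreatest (fun k => ω k = 0) (j - 1)
  have hp : ω p = 0 := Nat.findGreatest_spec (P := fun k => ω k = 0) (show p₀ ≤ j - 1 by omega) hp₀
  have hpj : p < j := by have := Nat.findGreatest_le (P := fun k => ω k = 0) (j - 1); omega
  have hex : ∃ q, j ≤ q ∧ ω q = 0 :=
    let ⟨q, hq, hjq⟩ := hinf.exists_gt j
    ⟨q, hjq.le, hq⟩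
  obtain ⟨hjq, hq⟩ := Nat.find_spec hex
  have hgap : ∀ k, p < k → k < Nat.find hex → ω k ≠ 0 := by
    intro k hpk hkq hk
    rcases lt_or_ge k j with hkj | hkj
    · exact Nat.findGreatest_is_greatest hpk (by omega) hk
    · exact Nat.find_min hex hkq ⟨hkj, hk⟩
  have hwq : j + w.length ≤ Nat.find hex := by
    by_contra hlt
    exact hw.apply_ne h0w (r := Nat.find hex - j) (by omega)
      (by rwa [Nat.add_sub_cancel' hjq])
  obtain ⟨hocc, h0⟩ := occursAt_sandwich_window hp hq (by omega) hgap
  refine ⟨_, p, hocc, h0, hpj, ?_⟩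
  rw [window_drop_take (by omega), show p + 1 + (j - p - 1) = j by omega]
  exact occursAt_iff_window_eq.1 hw

/-- Triples `(w', i, p)` such that the block `0w'0` occurs at `p < n` and `w` occurs in `w'`
at `i`; such a triple stands for the occurrence of `w` in `ω` at `p + 1 + i`. -/
def blockOccs (ω : ℕ → Fin m) (R : Finset (List (Fin m))) (w : List (Fin m)) (n : ℕ) :
    Finset (Σ _ : List (Fin m), ℕ × ℕ) :=
  R.sigma fun w' => ((Finset.range w'.length).filter fun i => (w'.drop i).take w.length = w) ×ˢ
    (Finset.range n).filter (OccursAt (0 :: w' ++ [0]) ω)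

lemma card_blockOccs (R : Finset (List (Fin m))) (w : List (Fin m)) (n : ℕ) :
    (blockOccs ω R w n).card = ∑ w' ∈ R, NOcc w w' * occCount (0 :: w' ++ [0]) ω n := by
  simp only [blockOccs, Finset.card_sigma, Finset.card_product, NOcc, occCount]

lemma card_blockOccs_le {R : Finset (List (Fin m))} {ℓ : ℕ} (h0R : ∀ u ∈ R, (0 : Fin m) ∉ u)
    (hlen : ∀ u ∈ R, u.length ≤ ℓ) (w : List (Fin m)) (n : ℕ) :
    (blockOccs ω R w n).card ≤ occCount w ω (n + ℓ) := by
  simp only [blockOccs, occCount]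
  refine Finset.card_le_card_of_injOn (fun x => x.2.2 + 1 + x.2.1) ?_ ?_
  · rintro ⟨w', i, p⟩ hx
    simp only [Finset.coe_sigma, Set.mem_sigma_iff, Finset.coe_product, Set.mem_prod,
      Finset.coe_filter, Finset.mem_range, Set.mem_ofPred_eq] at hx
    obtain ⟨hw'R, ⟨hi, hdt⟩, hp, hocc⟩ := hx
    have := hlen w' hw'R
    simp only [Finset.coe_filter, Finset.mem_range, Set.mem_ofPred_eq]
    refine ⟨by omega, ?_⟩
    rw [← hdt]
    exact (occursAt_sandwich_iff.1 hocc).2.1.take_drop i w.length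
  · rintro ⟨w₁, i₁, p₁⟩ hx ⟨w₂, i₂, p₂⟩ hy hxy
    simp only [Finset.coe_sigma, Set.mem_sigma_iff, Finset.coe_product, Set.mem_prod,
      Finset.coe_filter, Finset.mem_range, Set.mem_ofPred_eq] at hx hy hxy
    obtain ⟨hw₁R, ⟨hi₁, -⟩, -, hocc₁⟩ := hx
    obtain ⟨hw₂R, ⟨hi₂, -⟩, -, hocc₂⟩ := hy
    obtain ⟨rfl, rfl⟩ := eq_of_sandwich_of_sandwich hocc₁ (h0R w₁ hw₁R) hocc₂ (h0R w₂ hw₂R)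
      (k := p₁ + 1 + i₁) (by omega) (by omega)
    obtain rfl : i₁ = i₂ := by omega
    rfl

lemma occCount_le_card_blockOccs_add (hinf : {n | ω n = 0}.Infinite)
    {R : Finset (List (Fin m))} (hR : ∀ u, IsReturnWord ω u → u ∈ R) {w : List (Fin m)}
    (hw : w ≠ []) (h0w : (0 : Fin m) ∉ w) {p₀ : ℕ} (hp₀ : ω p₀ = 0) (n : ℕ) :
    occCount w ω n ≤ (blockOccs ω R w n).card + (p₀ + 1) := by
  have hsub : (Finset.range n).filter (OccursAt w ω) ⊆
      (blockOccs ω R w n).image (fun x => x.2.2 + 1 + x.2.1) ∪ Finset.range (p₀ + 1) := by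
    intro j hj
    rw [Finset.mem_filter, Finset.mem_range] at hj
    rw [Finset.mem_union, Finset.mem_range, Finset.mem_image]
    refine (lt_or_ge p₀ j).imp (fun hp₀j => ?_) (fun hjp₀ => by omega)
    obtain ⟨w', p, hocc, h0w', hpj, hdt⟩ := exists_sandwich_of_occursAt hinf hp₀ hp₀j hj.2 h0w
    have hlen := add_length_le_of_drop_take_eq hw hdt
    have hwpos := List.length_pos_iff.2 hw
    refine ⟨⟨w', j - p - 1, p⟩, ?_, by dsimp only; omega⟩
    simp only [blockOccs, Finset.mem_sigma, Finset.mem_product, Finset.mem_filter,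
      Finset.mem_range]
    refine ⟨hR w' ⟨?_, h0w', p, hocc⟩, ⟨by omega, hdt⟩, by omega, hocc⟩
    rintro rfl
    rw [List.length_nil] at hlen
    omega
  calc occCount w ω n
      ≤ ((blockOccs ω R w n).image (fun x => x.2.2 + 1 + x.2.1)).card + (p₀ + 1) :=
        (Finset.card_le_card hsub).trans ((Finset.card_union_le _ _).trans (by simp))
    _ ≤ (blockOccs ω R w n).card + (p₀ + 1) := by gcongr; exact Finset.card_image_le

end Blocks

lemma tendsto_div_natCast_of_abs_sub_le {a b : ℕ → ℝ} {C x : ℝ} (hab : ∀ n, |a n - b n| ≤ C)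
    (hb : Tendsto (fun n => b n / n) atTop (𝓝 x)) : Tendsto (fun n => a n / n) atTop (𝓝 x) := by
  have hdiff : Tendsto (fun n => (a n - b n) / n) atTop (𝓝 0) := by
    refine squeeze_zero_norm (fun n => ?_) (tendsto_const_div_atTop_nhds_zero_nat C)
    rw [norm_div, Real.norm_eq_abs, RCLike.norm_natCast]
    exact div_le_div_of_nonneg_right (hab n) n.cast_nonneg
  simpa [← add_div] using hb.add hdiff

section Frequencies

variable {m : ℕ} [NeZero m] {ω : ℕ → Fin m} {R : Finset (List (Fin m))} {ℓ : ℕ}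

lemma exists_abs_occCount_sandwich_sub_le (hinf : {n | ω n = 0}.Infinite)
    (hR : ∀ w, w ∈ R ↔ IsReturnWord ω w) (hlen : ∀ u ∈ R, u.length ≤ ℓ) {u : List (Fin m)}
    (hu : u ∈ R) : ∃ C : ℝ, ∀ n, |(occCount (0 :: u ++ [0]) ω n : ℝ) - ((occCount u ω n : ℝ) -
      ∑ w' ∈ properSuperwords R u, (NOcc u w' : ℝ) * occCount (0 :: w' ++ [0]) ω n)| ≤ C := by
  obtain ⟨hune, h0u, -⟩ := (hR u).1 hu
  obtain ⟨p₀, hp₀⟩ := hinf.nonempty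
  refine ⟨p₀ + 1 + ℓ, fun n => ?_⟩
  have hupper : ((blockOccs ω R u n).card : ℝ) ≤ occCount u ω n + ℓ := by
    exact_mod_cast (card_blockOccs_le (fun w hw => ((hR w).1 hw).2.1) hlen u n).trans
      (occCount_add_le u n ℓ)
  have hlower : (occCount u ω n : ℝ) ≤ (blockOccs ω R u n).card + (p₀ + 1) := by
    exact_mod_cast occCount_le_card_blockOccs_add hinf (fun w hw => (hR w).2 hw) hune h0u hp₀ n
  rw [card_blockOccs, Nat.cast_sum] at hupper hlower
  simp only [Nat.cast_mul] at hupper hlower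
  rw [sum_NOcc_mul_eq_add hu hune] at hupper hlower
  rw [abs_le]
  constructor <;> linarith

theorem hasFreq_sandwich_altChainSum (hinf : {n | ω n = 0}.Infinite)
    (hR : ∀ w, w ∈ R ↔ IsReturnWord ω w) {ν : List (Fin m) → ℝ}
    (hν : ∀ w ∈ R, HasFreq w ω (ν w)) (hlen : ∀ u ∈ R, u.length ≤ ℓ) {u : List (Fin m)}
    (hu : u ∈ R) : HasFreq (0 :: u ++ [0]) ω (altChainSum R ν ℓ u) := by
  have ih : ∀ w' ∈ properSuperwords R u,
      HasFreq (0 :: w' ++ [0]) ω (altChainSum R ν ℓ w') := fun w' hw' =>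
    hasFreq_sandwich_altChainSum hinf hR hν hlen (properSuperwords_subset R u hw')
  obtain ⟨C, hC⟩ := exists_abs_occCount_sandwich_sub_le hinf hR hlen hu
  simp only [hasFreq_iff_tendsto_occCount] at hν ih ⊢
  rw [altChainSum_eq_sub R ν hlen]
  refine tendsto_div_natCast_of_abs_sub_le hC ?_
  simp only [sub_div, Finset.sum_div, mul_div_assoc]
  exact (hν u hu).sub (tendsto_finsetSum _ fun w' hw' => (ih w' hw').const_mul _)
termination_by ℓ - u.length
decreasing_by exact sub_length_lt_of_mem_properSuperwords hlen hw'

end Frequencies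

/-- If `ω` has a finite return word set `R`, the symbol `0` occurs infinitely often, and the
frequency `ν([w])` exists for every `w ∈ R`, then for each `w ∈ R` the exact frequency `F_w`
(the frequency of `0w0`) exists and equals `∑_{j=0}^{ℓ-|w|} (-1)^j S_w^{(j)}`,
where `ℓ` is the maximal length of a return word. -/
theorem exact_freq_inclusion_exclusion {m : ℕ} [NeZero m] (ω : ℕ → Fin m)
    (hinf : {n | ω n = 0}.Infinite)
    (R : Finset (List (Fin m))) (hR : ∀ w, w ∈ R ↔ IsReturnWord ω w)
    (ν : List (Fin m) → ℝ) (hν : ∀ w ∈ R, HasFreq w ω (ν w))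
    (ℓ : ℕ) (hℓ : ℓ = R.sup List.length)
    (w : List (Fin m)) (hw : w ∈ R) :
    HasFreq (0 :: w ++ [0]) ω
      (∑ j ∈ Finset.range (ℓ - w.length + 1), (-1 : ℝ) ^ j * Schain R ν j w) :=
  hasFreq_sandwich_altChainSum hinf hR hν (fun _ hu => hℓ ▸ Finset.le_sup hu) hw
end
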